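/- Let (s,t) ∈ [-1/2,1/2] × [-1/2,1/2]. If s and t admit finite balanced ternary representations a and b such that for every index j ≥ 1 either a_j · b_j = 0 or a_j + b_j = 0, then the point (s,t) lies in the hexagon snowflake fractal S_F. -/

import Mathlib

open scoped Pointwise

/-- `a : ℕ+ → ℤ` is a balanced ternary representation of `t ∈ [-1/2,1/2]`:
all digits are in `{-1,0,1}` and `t = ∑_{j=1}^∞ a_j 3^{-j}`. -/
def IsBalTernRep (a : ℕ+ → ℤ) (t : ℝ) : Prop :=
  (∀ j : ℕ+, a j = -1 ∨ a j = 0 ∨ a j = 1) ∧ t = ∑' j : ℕ+, (a j : ℝ) / 3 ^ (j : ℕ)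

/-- The initial hexagon `H₀`: the square `[-1/2,1/2]²` with the two corner
squares `(1/6,1/2] × (1/6,1/2]` and `[-1/2,-1/6) × [-1/2,-1/6)` removed. -/
def H0 : Set (ℝ × ℝ) :=
  {p | |p.1| ≤ 1 / 2 ∧ |p.2| ≤ 1 / 2 ∧
    ¬(p.1 > 1 / 6 ∧ p.2 > 1 / 6) ∧ ¬(p.1 < -(1 / 6) ∧ p.2 < -(1 / 6))}

/-- The seven translation vectors used to build the hexagon snowflake fractal. -/
def V : Set (ℝ × ℝ) :=
  {(0, 0), (1 / 3, 0), (0, 1 / 3), (1 / 3, -(1 / 3)), (-(1 / 3), 0), (0, -(1 / 3)),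
    (-(1 / 3), 1 / 3)}

/-- The decreasing sequence of sets whose intersection is the hexagon snowflake fractal. -/
noncomputable def G : ℕ → Set (ℝ × ℝ)
  | 0 => H0
  | n + 1 => ⋃ v ∈ V, (fun p => p + v) '' ((1 / 3 : ℝ) • G n)

/-- The hexagon snowflake fractal. -/
noncomputable def SF : Set (ℝ × ℝ) := ⋂ n, G n


noncomputable def rep (a : ℕ+ → ℤ) : ℕ → ℝ := fun n => (a n.succPNat : ℝ) / 3 ^ (n + 1)

lemma rep_norm_le (a : ℕ+ → ℤ) (hd : ∀ j : ℕ+, a j = -1 ∨ a j = 0 ∨ a j = 1) (n : ℕ) :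
    ‖rep a n‖ ≤ (1/3 : ℝ) ^ (n + 1) := by
  have h1 : |(a n.succPNat : ℝ)| ≤ 1 := by rcases hd n.succPNat with h|h|h <;> simp [h]
  have h2 : (1/3 : ℝ) ^ (n+1) = 1 / 3 ^ (n+1) := by rw [div_pow, one_pow]
  rw [rep, Real.norm_eq_abs, abs_div, abs_of_nonneg (by positivity : (0:ℝ) ≤ 3 ^ (n+1)), h2]
  gcongr

lemma summable_third : Summable (fun n : ℕ => (1/3 : ℝ) ^ (n + 1)) := by
  simp_rw [pow_succ]
  exact (summable_geometric_of_lt_one (by norm_num) (by norm_num)).mul_right _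

lemma summable_rep (a : ℕ+ → ℤ) (hd : ∀ j : ℕ+, a j = -1 ∨ a j = 0 ∨ a j = 1) :
    Summable (rep a) :=
  Summable.of_norm_bounded summable_third (rep_norm_le a hd)

lemma tsum_rep_eq (a : ℕ+ → ℤ) :
    ∑' j : ℕ+, (a j : ℝ) / 3 ^ (j : ℕ) = ∑' n : ℕ, rep a n := by
  rw [← Equiv.pnatEquivNat.symm.tsum_eq (f := fun j : ℕ+ => (a j : ℝ) / 3 ^ (j : ℕ))]
  rfl

lemma tsum_geom_third : ∑' n : ℕ, (1/3 : ℝ) ^ (n + 1) = 1/2 := by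
  simp_rw [pow_succ]
  rw [tsum_mul_right, tsum_geometric_of_lt_one (by norm_num) (by norm_num)]
  norm_num

lemma rep_bound (a : ℕ+ → ℤ) (hd : ∀ j : ℕ+, a j = -1 ∨ a j = 0 ∨ a j = 1) :
    |∑' j : ℕ+, (a j : ℝ) / 3 ^ (j : ℕ)| ≤ 1/2 := by
  rw [tsum_rep_eq]
  have hsn : Summable (fun n : ℕ => ‖rep a n‖) := by
    simpa only [Real.norm_eq_abs] using (summable_rep a hd).abs
  calc |∑' n : ℕ, rep a n| ≤ ∑' n : ℕ, ‖rep a n‖ := by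
        rw [← Real.norm_eq_abs]; exact norm_tsum_le_tsum_norm hsn
    _ ≤ ∑' n : ℕ, (1/3 : ℝ) ^ (n + 1) :=
        Summable.tsum_le_tsum (rep_norm_le a hd) hsn summable_third
    _ = 1/2 := tsum_geom_third

lemma digit_split (a : ℕ+ → ℤ) (hd : ∀ j : ℕ+, a j = -1 ∨ a j = 0 ∨ a j = 1) :
    ∑' j : ℕ+, (a j : ℝ) / 3 ^ (j : ℕ)
      = (a 1 : ℝ) / 3 + (1/3) * ∑' j : ℕ+, ((a (j+1) : ℤ) : ℝ) / 3 ^ (j : ℕ) := by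
  rw [tsum_rep_eq, tsum_rep_eq, Summable.tsum_eq_zero_add (summable_rep a hd)]
  have h0 : rep a 0 = (a 1 : ℝ) / 3 := by
    have h1 : (0 : ℕ).succPNat = 1 := rfl
    rw [rep, h1]; norm_num
  have hshift : ∀ n : ℕ, rep a (n + 1) = (1/3) * rep (fun j => a (j+1)) n := by
    intro n
    have hp : (n+1).succPNat = n.succPNat + 1 := by
      apply PNat.coe_injective; simp [Nat.succPNat]; rfl
    simp only [rep, hp]
    ring
  simp_rw [hshift]
  rw [tsum_mul_left, h0]

lemma vmem (x y : ℤ) (hx : x = -1 ∨ x = 0 ∨ x = 1) (hy : y = -1 ∨ y = 0 ∨ y = 1)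
    (h : x * y = 0 ∨ x + y = 0) : ((x : ℝ)/3, (y : ℝ)/3) ∈ V := by
  rcases hx with h1|h1|h1 <;> rcases hy with h2|h2|h2 <;>
    subst h1 h2 <;>
    simp only [V, Set.mem_insert_iff, Set.mem_singleton_iff, Prod.mk.injEq] <;>
    norm_num at h <;> norm_num

lemma key_mem : ∀ n : ℕ, ∀ (s t : ℝ) (a b : ℕ+ → ℤ), IsBalTernRep a s → IsBalTernRep b t →
    (∀ j : ℕ+, a j * b j = 0 ∨ a j + b j = 0) → (s, t) ∈ G n := by
  intro n
  induction n with
  | zero =>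
    intro s t a b ha hb hab
    obtain ⟨hda, hsa⟩ := ha
    obtain ⟨hdb, hsb⟩ := hb
    have hs2 : |s| ≤ 1/2 := hsa ▸ rep_bound a hda
    have ht2 : |t| ≤ 1/2 := hsb ▸ rep_bound b hdb
    have hsplit_a : s = (a 1 : ℝ)/3 + (1/3) * ∑' j : ℕ+, ((a (j+1) : ℤ) : ℝ)/3^(j:ℕ) :=
      hsa.trans (digit_split a hda)
    have hsplit_b : t = (b 1 : ℝ)/3 + (1/3) * ∑' j : ℕ+, ((b (j+1) : ℤ) : ℝ)/3^(j:ℕ) :=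
      hsb.trans (digit_split b hdb)
    have hta := abs_le.mp (rep_bound _ (fun j => hda (j+1)))
    have htb := abs_le.mp (rep_bound _ (fun j => hdb (j+1)))
    refine ⟨hs2, ht2, ?_, ?_⟩
    · rintro ⟨h1, h2⟩
      have ha1 : a 1 = 1 := by
        rcases hda 1 with h|h|h
        · exfalso; rw [h] at hsplit_a; push_cast at hsplit_a; linarith [hta.2]
        · exfalso; rw [h] at hsplit_a; push_cast at hsplit_a; linarith [hta.2]
        · exact h
      have hb1 : b 1 = 1 := by
        rcases hdb 1 with h|h|h
        · exfalso; rw [h] at hsplit_b; push_cast at hsplit_b; linarith [htb.2]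
        · exfalso; rw [h] at hsplit_b; push_cast at hsplit_b; linarith [htb.2]
        · exact h
      rcases hab 1 with h|h <;> rw [ha1, hb1] at h <;> omega
    · rintro ⟨h1, h2⟩
      have ha1 : a 1 = -1 := by
        rcases hda 1 with h|h|h
        · exact h
        · exfalso; rw [h] at hsplit_a; push_cast at hsplit_a; linarith [hta.1]
        · exfalso; rw [h] at hsplit_a; push_cast at hsplit_a; linarith [hta.1]
      have hb1 : b 1 = -1 := by
        rcases hdb 1 with h|h|h
        · exact h
        · exfalso; rw [h] at hsplit_b; push_cast at hsplit_b; linarith [htb.1]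
        · exfalso; rw [h] at hsplit_b; push_cast at hsplit_b; linarith [htb.1]
      rcases hab 1 with h|h <;> rw [ha1, hb1] at h <;> omega
  | succ n ih =>
    intro s t a b ha hb hab
    obtain ⟨hda, hsa⟩ := ha
    obtain ⟨hdb, hsb⟩ := hb
    set s' : ℝ := ∑' j : ℕ+, ((a (j+1) : ℤ) : ℝ)/3^(j:ℕ) with hs'def
    set t' : ℝ := ∑' j : ℕ+, ((b (j+1) : ℤ) : ℝ)/3^(j:ℕ) with ht'def
    have ha' : IsBalTernRep (fun j => a (j+1)) s' := ⟨fun j => hda (j+1), rfl⟩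
    have hb' : IsBalTernRep (fun j => b (j+1)) t' := ⟨fun j => hdb (j+1), rfl⟩
    have hmem : (s', t') ∈ G n := ih s' t' _ _ ha' hb' (fun j => hab (j+1))
    have hsplit_a : s = (a 1 : ℝ)/3 + (1/3) * s' := hsa.trans (digit_split a hda)
    have hsplit_b : t = (b 1 : ℝ)/3 + (1/3) * t' := hsb.trans (digit_split b hdb)
    show (s, t) ∈ ⋃ v ∈ V, (fun p => p + v) '' ((1 / 3 : ℝ) • G n)
    refine Set.mem_iUnion₂.mpr ⟨((a 1 : ℝ)/3, (b 1 : ℝ)/3), ?_, ?_⟩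
    · exact vmem (a 1) (b 1) (hda 1) (hdb 1) (hab 1)
    · refine ⟨(1/3 : ℝ) • (s', t'), Set.smul_mem_smul_set hmem, ?_⟩
      show (1/3 : ℝ) • (s', t') + ((a 1 : ℝ)/3, (b 1 : ℝ)/3) = (s, t)
      rw [Prod.smul_mk, Prod.mk_add_mk, Prod.mk.injEq]
      constructor <;> simp only [smul_eq_mul] <;> linarith

theorem stmt12 (s t : ℝ) (hs : s ∈ Set.Icc (-(1 / 2) : ℝ) (1 / 2))
    (ht : t ∈ Set.Icc (-(1 / 2) : ℝ) (1 / 2))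
    (a b : ℕ+ → ℤ) (ha : IsBalTernRep a s) (hb : IsBalTernRep b t)
    (hafin : (Function.support a).Finite) (hbfin : (Function.support b).Finite)
    (hab : ∀ j : ℕ+, a j * b j = 0 ∨ a j + b j = 0) :
    (s, t) ∈ SF :=
  Set.mem_iInter.mpr fun n => key_mem n s t a b ha hb hab
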